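/- Let v1, v2, v3, v4, v5 be pairwise distinct real numbers. Set p = 1 − [v1, v2, v3, v4], p' = 1 − [v2, v3, v4, v5], x = [v1, v2, v3, v5] and y = [v1, v3, v4, v5]. Then x = (1 − p)/p' and y = (1 − p')/p. (This expresses the corner invariants x_i, y_i of a polygon inscribed in a conic in terms of the cross-ratio coordinates p_i = 1 − [v_{i−2}, v_{i−1}, v_i, v_{i+1}] of its vertices on the projective line.) -/
import Mathlib


/-- The cross-ratio of four real numbers. -/
noncomputable def crossRatio (t1 t2 t3 t4 : ℝ) : ℝ :=
  ((t1 - t2) * (t3 - t4)) / ((t1 - t3) * (t2 - t4))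

lemma one_sub_crossRatio (t1 t2 t3 t4 : ℝ) (h13 : t1 ≠ t3) (h24 : t2 ≠ t4) :
    1 - crossRatio t1 t2 t3 t4 = ((t1 - t4) * (t2 - t3)) / ((t1 - t3) * (t2 - t4)) := by
  unfold crossRatio
  have h13 := sub_ne_zero.2 h13
  have h24 := sub_ne_zero.2 h24
  field_simp
  ring

/-- For pairwise distinct reals `v1, …, v5`, setting `p = 1 - [v1,v2,v3,v4]`,
`p' = 1 - [v2,v3,v4,v5]`, `x = [v1,v2,v3,v5]` and `y = [v1,v3,v4,v5]`, one has
`x = (1 - p)/p'` and `y = (1 - p')/p`. -/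
theorem corner_invariants_via_crossratios (v1 v2 v3 v4 v5 : ℝ)
    (h : ([v1, v2, v3, v4, v5] : List ℝ).Pairwise (· ≠ ·))
    (p p' x y : ℝ)
    (hp : p = 1 - crossRatio v1 v2 v3 v4)
    (hp' : p' = 1 - crossRatio v2 v3 v4 v5)
    (hx : x = crossRatio v1 v2 v3 v5)
    (hy : y = crossRatio v1 v3 v4 v5) :
    x = (1 - p) / p' ∧ y = (1 - p') / p := by
  simp only [List.pairwise_cons, List.mem_cons, List.mem_singleton, List.not_mem_nil,
    forall_eq_or_imp, forall_eq, List.Pairwise.nil] at h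
  obtain ⟨⟨h12, h13, h14, h15⟩, ⟨h23, h24, h25⟩, ⟨h34, h35⟩, h45, -⟩ := h
  have d12 := sub_ne_zero.2 h12
  have d13 := sub_ne_zero.2 h13
  have d14 := sub_ne_zero.2 h14
  have d15 := sub_ne_zero.2 h15.1
  have d23 := sub_ne_zero.2 h23
  have d24 := sub_ne_zero.2 h24
  have d25 := sub_ne_zero.2 h25.1
  have d34 := sub_ne_zero.2 h34
  have d35 := sub_ne_zero.2 h35.1
  have d45 := sub_ne_zero.2 h45.1
  rw [one_sub_crossRatio _ _ _ _ h13 h24] at hp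
  rw [one_sub_crossRatio _ _ _ _ h24 h35.1] at hp'
  have hpne : p ≠ 0 := hp ▸ div_ne_zero (mul_ne_zero d14 d23) (mul_ne_zero d13 d24)
  have hp'ne : p' ≠ 0 := hp' ▸ div_ne_zero (mul_ne_zero d25 d34) (mul_ne_zero d24 d35)
  constructor
  · rw [eq_div_iff hp'ne, hx, hp, hp', crossRatio]
    field_simp
    ring
  · rw [eq_div_iff hpne, hy, hp, hp', crossRatio]
    field_simp
    ring
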